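/- Let a_i > 0 and p_i > 0 real, t_n = (a_1 + (a_2 + ... + a_n^{p_n})...)^{p_1}, and define f_0(y) = y, f_k(y) = f_{k-1}(y)^{1/p_k} - a_k. Then for every n ≥ 1, t_{n+1} - t_n ≤ a_{n+1}^{p_{n+1}} · ∏_{i: p_i ≤ 1} p_i·f_{i-1}(t_n)^{(p_i-1)/p_i} · ∏_{i: p_i > 1} p_i·f_{i-1}(t_{n+1})^{(p_i-1)/p_i}, where the products range over 1 ≤ i ≤ n. -/

import Mathlib

/-!
Going from `t n` to `t (n + 1)` replaces the innermost tail `0` by `a (n + 1) ^ p (n + 1)`.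
At each level `i` the two tails are `w ^ p i` and `z ^ p i` with `w ≤ z`, and by the mean value
theorem `z ^ q - w ^ q ≤ q c ^ (q - 1) (z - w)` with `c = w` when `x ↦ x ^ q` is concave
(`q ≤ 1`) and `c = z` when it is convex (`q > 1`). Since `c ^ q` is the tail at level `i`,
`c ^ (q - 1)` is that tail raised to `(q - 1) / q`, and the denesting functions recover the tails
from `t n` and `t (n + 1)`. Multiplying the level-wise bounds telescopes to the claim.
-/

/-- `pow_form a p n i = (a i + (a (i+1) + ⋯ + (a n) ^ (p n)) ^ (p (i+1))) ^ (p i)`;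
the `n`-th approximant `t n` of the continued power form is `pow_form a p n 1`. -/
noncomputable def powForm (a : ℕ → ℝ) (p : ℕ → ℝ) (n : ℕ) : ℕ → ℝ
  | i => if _ : i ≤ n then (a i + powForm a p n (i + 1)) ^ (p i) else 0
termination_by i => n + 1 - i
decreasing_by omega

/-- Denesting functions for continued power forms:
`denP a p 0 y = y`, `denP a p k y = (denP a p (k-1) y) ^ (1 / p k) - a k`. -/
noncomputable def denP (a : ℕ → ℝ) (p : ℕ → ℝ) : ℕ → ℝ → ℝ
  | 0, y => y
  | k + 1, y => (denP a p k y) ^ (p (k + 1))⁻¹ - a (k + 1)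

open Real Finset

lemma le_prod_mul_of_le_mul_succ {R : Type*} [CommSemiring R] [PartialOrder R] [IsOrderedRing R]
    {c d : ℕ → R} {m N : ℕ} (hmN : m ≤ N) (hc : ∀ i ∈ Ico m N, 0 ≤ c i)
    (h : ∀ i ∈ Ico m N, d i ≤ c i * d (i + 1)) :
    d m ≤ (∏ i ∈ Ico m N, c i) * d N := by
  induction N, hmN using Nat.le_induction with
  | base => simp
  | succ N hmN ih =>
    have hN : N ∈ Ico m (N + 1) := by simp [hmN]
    have hsub : Ico m N ⊆ Ico m (N + 1) := Ico_subset_Ico_right N.le_succ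
    calc d m ≤ (∏ i ∈ Ico m N, c i) * d N :=
          ih (fun i hi ↦ hc i (hsub hi)) (fun i hi ↦ h i (hsub hi))
      _ ≤ (∏ i ∈ Ico m N, c i) * (c N * d (N + 1)) :=
          mul_le_mul_of_nonneg_left (h N hN) (prod_nonneg fun i hi ↦ hc i (hsub hi))
      _ = (∏ i ∈ Ico m (N + 1), c i) * d (N + 1) := by
          rw [prod_Ico_succ_top hmN, mul_assoc]

namespace Real

lemma rpow_sub_rpow_le_of_le_one {w z q : ℝ} (hw : 0 < w) (hwz : w ≤ z) (hq₀ : 0 ≤ q)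
    (hq₁ : q ≤ 1) : z ^ q - w ^ q ≤ q * w ^ (q - 1) * (z - w) := by
  rcases hwz.eq_or_lt with rfl | hlt
  · simp
  have hslope := (concaveOn_rpow hq₀ hq₁).slope_le_of_hasDerivAt (Set.mem_Ici.2 hw.le)
    (Set.mem_Ici.2 (hw.trans hlt).le) hlt (hasDerivAt_rpow_const (Or.inl hw.ne'))
  rwa [slope_def_field, div_le_iff₀ (sub_pos.2 hlt)] at hslope

lemma rpow_sub_rpow_le_of_one_le {w z q : ℝ} (hw : 0 ≤ w) (hwz : w ≤ z) (hq : 1 ≤ q) :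
    z ^ q - w ^ q ≤ q * z ^ (q - 1) * (z - w) := by
  rcases hwz.eq_or_lt with rfl | hlt
  · simp
  have hslope := (convexOn_rpow hq).slope_le_of_hasDerivAt (Set.mem_Ici.2 hw)
    (Set.mem_Ici.2 (hw.trans hlt.le)) hlt (hasDerivAt_rpow_const (Or.inr hq))
  rwa [slope_def_field, div_le_iff₀ (sub_pos.2 hlt)] at hslope

lemma rpow_sub_one_eq_rpow_rpow {x q : ℝ} (hx : 0 ≤ x) (hq : q ≠ 0) :
    x ^ (q - 1) = (x ^ q) ^ ((q - 1) / q) := by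
  rw [← rpow_mul hx, mul_div_cancel₀ _ hq]

end Real

section PowForm

variable {a p : ℕ → ℝ}

lemma powForm_of_le {n i : ℕ} (h : i ≤ n) :
    powForm a p n i = (a i + powForm a p n (i + 1)) ^ p i := by
  rw [powForm, dif_pos h]

lemma powForm_of_lt {n i : ℕ} (h : n < i) : powForm a p n i = 0 := by
  rw [powForm, dif_neg h.not_ge]

lemma powForm_nonneg (ha : ∀ k, 1 ≤ k → 0 ≤ a k) {n i : ℕ} (hi : 1 ≤ i) :
    0 ≤ powForm a p n i := by
  rcases lt_or_ge n i with hni | hin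
  · exact (powForm_of_lt hni).ge
  replace hin := hin.trans n.le_succ
  induction hin using Nat.decreasingInduction with
  | self => exact (powForm_of_lt n.lt_succ_self).ge
  | of_succ k hk ih =>
    rw [powForm_of_le (Nat.le_of_lt_succ hk)]
    exact rpow_nonneg (add_nonneg (ha k hi) (ih (by omega))) _

lemma add_powForm_pos (ha : ∀ k, 1 ≤ k → 0 < a k) (n : ℕ) {i : ℕ} (hi : 1 ≤ i) :
    0 < a i + powForm a p n (i + 1) :=
  add_pos_of_pos_of_nonneg (ha i hi) (powForm_nonneg (fun k hk ↦ (ha k hk).le) (by omega))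

lemma powForm_le_powForm_succ (ha : ∀ k, 1 ≤ k → 0 < a k) (hp : ∀ k, 1 ≤ k → 0 < p k)
    {n i : ℕ} (hi : 1 ≤ i) : powForm a p n i ≤ powForm a p (n + 1) i := by
  rcases lt_or_ge (n + 1) i with hni | hin
  · rw [powForm_of_lt hni, powForm_of_lt (by omega)]
  induction hin using Nat.decreasingInduction with
  | self =>
    rw [powForm_of_lt n.lt_succ_self]
    exact powForm_nonneg (fun k hk ↦ (ha k hk).le) hi
  | of_succ k hk ih =>
    rw [powForm_of_le (Nat.le_of_lt_succ hk), powForm_of_le (n := n + 1) hk.le]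
    exact rpow_le_rpow (add_powForm_pos ha n hi).le (add_le_add_right (ih (by omega)) _)
      (hp k hi).le

lemma denP_powForm_one (ha : ∀ k, 1 ≤ k → 0 < a k) (hp : ∀ k, 1 ≤ k → 0 < p k) {n i : ℕ}
    (hin : i ≤ n) : denP a p i (powForm a p n 1) = powForm a p n (i + 1) := by
  induction i with
  | zero => rfl
  | succ i ih =>
    rw [denP, ih (by omega), powForm_of_le hin,
      rpow_rpow_inv (add_powForm_pos ha n (by omega)).le (hp (i + 1) (by omega)).ne',
      add_sub_cancel_left]

noncomputable def powFormStepFactor (a p : ℕ → ℝ) (n i : ℕ) : ℝ :=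
  if p i ≤ 1 then p i * powForm a p n i ^ ((p i - 1) / p i)
  else p i * powForm a p (n + 1) i ^ ((p i - 1) / p i)

lemma powFormStepFactor_nonneg (ha : ∀ k, 1 ≤ k → 0 ≤ a k) (hp : ∀ k, 1 ≤ k → 0 < p k)
    {n i : ℕ} (hi : 1 ≤ i) : 0 ≤ powFormStepFactor a p n i := by
  unfold powFormStepFactor
  split_ifs <;> exact mul_nonneg (hp i hi).le (rpow_nonneg (powForm_nonneg ha hi) _)

lemma powForm_succ_sub_le_mul (ha : ∀ k, 1 ≤ k → 0 < a k) (hp : ∀ k, 1 ≤ k → 0 < p k)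
    {n i : ℕ} (hi : 1 ≤ i) (hin : i ≤ n) :
    powForm a p (n + 1) i - powForm a p n i ≤
      powFormStepFactor a p n i * (powForm a p (n + 1) (i + 1) - powForm a p n (i + 1)) := by
  have hw : 0 < a i + powForm a p n (i + 1) := add_powForm_pos ha n hi
  have hwz : a i + powForm a p n (i + 1) ≤ a i + powForm a p (n + 1) (i + 1) :=
    add_le_add_right (powForm_le_powForm_succ ha hp (by omega)) _
  have hsub : powForm a p (n + 1) (i + 1) - powForm a p n (i + 1) =
      (a i + powForm a p (n + 1) (i + 1)) - (a i + powForm a p n (i + 1)) := by ring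
  have hq := (hp i hi).ne'
  rw [hsub, powFormStepFactor, powForm_of_le hin, powForm_of_le (n := n + 1) (by omega)]
  split_ifs with hq₁
  · rw [← rpow_sub_one_eq_rpow_rpow hw.le hq]
    exact rpow_sub_rpow_le_of_le_one hw hwz (hp i hi).le hq₁
  · rw [← rpow_sub_one_eq_rpow_rpow (hw.trans_le hwz).le hq]
    exact rpow_sub_rpow_le_of_one_le hw.le hwz (not_le.1 hq₁).le

lemma powForm_succ_sub_le_prod (ha : ∀ k, 1 ≤ k → 0 < a k) (hp : ∀ k, 1 ≤ k → 0 < p k)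
    {n i : ℕ} (hi : 1 ≤ i) (hin : i ≤ n + 1) :
    powForm a p (n + 1) i - powForm a p n i ≤
      (∏ j ∈ Ico i (n + 1), powFormStepFactor a p n j) * a (n + 1) ^ p (n + 1) := by
  have hlast : powForm a p (n + 1) (n + 1) - powForm a p n (n + 1) = a (n + 1) ^ p (n + 1) := by
    rw [powForm_of_le le_rfl, powForm_of_lt (by omega), powForm_of_lt (by omega)]
    simp
  rw [← hlast]
  refine le_prod_mul_of_le_mul_succ (d := fun j ↦ powForm a p (n + 1) j - powForm a p n j) hin
    (fun j hj ↦ powFormStepFactor_nonneg (fun k hk ↦ (ha k hk).le) hp ?_)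
    (fun j hj ↦ powForm_succ_sub_le_mul ha hp ?_ ?_) <;>
  simp only [mem_Ico] at hj <;> omega

end PowForm

theorem power_form_inequality (a : ℕ → ℝ) (p : ℕ → ℝ)
    (ha : ∀ n, 1 ≤ n → 0 < a n) (hp : ∀ n, 1 ≤ n → 0 < p n) :
    ∀ n, 1 ≤ n →
      powForm a p (n + 1) 1 - powForm a p n 1 ≤
        (a (n + 1)) ^ (p (n + 1)) *
          (∏ i ∈ (Finset.Icc 1 n).filter (fun i => p i ≤ 1),
            p i * (denP a p (i - 1) (powForm a p n 1)) ^ ((p i - 1) / p i)) *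
          (∏ i ∈ (Finset.Icc 1 n).filter (fun i => 1 < p i),
            p i * (denP a p (i - 1) (powForm a p (n + 1) 1)) ^ ((p i - 1) / p i)) := by
  intro n _
  have hdenP : ∀ m, n ≤ m → ∀ i ∈ Icc 1 n,
      denP a p (i - 1) (powForm a p m 1) = powForm a p m i := by
    intro m hm i hi
    rw [mem_Icc] at hi
    rw [denP_powForm_one ha hp (by omega), Nat.sub_add_cancel hi.1]
  have hfactors : ∏ i ∈ Icc 1 n, powFormStepFactor a p n i =
      (∏ i ∈ (Icc 1 n).filter (fun i => p i ≤ 1),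
        p i * (denP a p (i - 1) (powForm a p n 1)) ^ ((p i - 1) / p i)) *
      (∏ i ∈ (Icc 1 n).filter (fun i => 1 < p i),
        p i * (denP a p (i - 1) (powForm a p (n + 1) 1)) ^ ((p i - 1) / p i)) := by
    simp only [powFormStepFactor, prod_ite, not_le]
    congr 1 <;> refine prod_congr rfl fun i hi ↦ ?_ <;>
      rw [hdenP _ (by omega) i (mem_filter.1 hi).1]
  have h := powForm_succ_sub_le_prod ha hp le_rfl (by omega : 1 ≤ n + 1)
  rw [Ico_add_one_right_eq_Icc, hfactors] at h
  linarith
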